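/- Let G=(V,E) be a distance-regular graph of vertex degree d and girth 4. Then for every edge {x,y}∈E, κ₀(x,y) = 0 and κ_LLY(x,y) = 2/d. -/

import Mathlib

open Filter
open scoped Classical

variable {V : Type*}

/-- The probability measure `μ_x^p` with idleness parameter `p`, on a `d`-regular graph:
`μ_x^p(x) = p`, `μ_x^p(z) = (1-p)/d` for `z` adjacent to `x`, and `0` otherwise. -/
noncomputable def muMeasure (G : SimpleGraph V) (d : ℕ) (p : ℝ) (x : V) : V → ℝ :=
  fun z => if z = x then p else if G.Adj x z then (1 - p) / d else 0

/-- `π` is a transport plan transporting `μ₁` to `μ₂`. -/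
def IsTransportPlan (μ₁ μ₂ : V → ℝ) (π : V → V → ℝ) : Prop :=
  (∀ u v, 0 ≤ π u v) ∧ (∀ u, ∑' v, π u v = μ₁ u) ∧ (∀ v, ∑' u, π u v = μ₂ v)

/-- The cost of a transport plan: `∑_{u,v} d(u,v) π(u,v)`. -/
noncomputable def transportCost (G : SimpleGraph V) (π : V → V → ℝ) : ℝ :=
  ∑' q : V × V, (G.dist q.1 q.2 : ℝ) * π q.1 q.2

/-- The Wasserstein distance `W₁(μ₁, μ₂)`: infimum of costs over all transport plans. -/
noncomputable def W1 (G : SimpleGraph V) (μ₁ μ₂ : V → ℝ) : ℝ :=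
  sInf {c : ℝ | ∃ π, IsTransportPlan μ₁ μ₂ π ∧ transportCost G π = c}

/-- The `p`-Ollivier Ricci curvature `κ_p(x,y) = 1 - W₁(μ_x^p, μ_y^p)` in a `d`-regular graph. -/
noncomputable def kappa (G : SimpleGraph V) (d : ℕ) (p : ℝ) (x y : V) : ℝ :=
  1 - W1 G (muMeasure G d p x) (muMeasure G d p y)

/-- The Lin–Lu–Yau curvature `κ_LLY(x,y) = lim_{p→1} κ_p(x,y)/(1-p)`. -/
noncomputable def kappaLLY (G : SimpleGraph V) (d : ℕ) (x y : V) : ℝ :=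
  limUnder (nhdsWithin 1 (Set.Iio (1 : ℝ))) fun p => kappa G d p x y / (1 - p)

/-- A graph is distance-regular if `|S_r(x) ∩ S_t(y)|` depends only on `r`, `t` and
`d(x,y)`. -/
def IsDistanceRegular (G : SimpleGraph V) : Prop :=
  ∀ x y x' y' : V, G.dist x y = G.dist x' y' → ∀ r t : ℕ,
    {z | G.dist x z = r ∧ G.dist y z = t}.ncard = {z | G.dist x' z = r ∧ G.dist y' z = t}.ncard

/-! Girth `4` makes `G` triangle-free, and distance-regularity then gives a constant number
`m ≥ 2` of common neighbours of any two vertices at distance `2`. Double counting shows that the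
intersection numbers `c_i` strictly increase, so the diameter is at most `d` and `G` is finite.
For an edge `xy` and `q = (1 - p) / d`, an explicit transport plan of cost `1 - 2 min(p, q)`
and a `0/1`-valued `1`-Lipschitz function attaining the same value show
`κ_p(x, y) = 2 min(p, q)`, which is `0` at `p = 0` and `2 (1 - p) / d` for `p` close to `1`. -/

open Finset SimpleGraph

namespace SimpleGraph

variable {G : SimpleGraph V}

lemma dist_eq_two_of_adj_of_adj {u v w : V} (huv : G.Adj u v) (hvw : G.Adj v w) (huw : u ≠ w)
    (hnadj : ¬G.Adj u w) : G.dist u w = 2 := by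
  simp [dist, edist_eq_two_iff.mpr ⟨huw, hnadj, v, huv, hvw.symm⟩]

lemma CliqueFree.not_adj_of_adj_of_adj (htf : G.CliqueFree 3) {u v w : V} (hu : G.Adj v u)
    (hw : G.Adj v w) : ¬G.Adj u w :=
  fun h => isIndepSet_neighborSet_of_triangleFree G htf v hu hw h.ne h

lemma CliqueFree.dist_eq_two_of_adj_of_adj (htf : G.CliqueFree 3) {u v w : V} (huv : G.Adj u v)
    (hvw : G.Adj v w) (huw : u ≠ w) : G.dist u w = 2 :=
  SimpleGraph.dist_eq_two_of_adj_of_adj huv hvw huw (htf.not_adj_of_adj_of_adj huv.symm hvw)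

lemma Connected.exists_adj_dist_eq_of_dist_eq_succ (hconn : G.Connected) {x y : V} {n : ℕ}
    (h : G.dist x y = n + 1) : ∃ z, G.Adj y z ∧ G.dist x z = n := by
  obtain ⟨w, hw⟩ := hconn.exists_walk_length_eq_dist y x
  rw [dist_comm, h] at hw
  cases w with
  | nil => simp at hw
  | @cons _ z _ hyz p =>
    refine ⟨z, hyz, le_antisymm ?_ ?_⟩
    · rw [dist_comm]
      simpa using (dist_le p).trans_eq (by simpa using hw)
    · have := hconn.dist_triangle (u := x) (v := z) (w := y)
      rw [dist_eq_one_iff_adj.mpr hyz.symm] at this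
      omega

lemma Connected.finite_setOf_dist_le [G.LocallyFinite] (hconn : G.Connected) (x : V) (n : ℕ) :
    {y | G.dist x y ≤ n}.Finite := by
  induction n with
  | zero => simp [hconn.dist_eq_zero_iff]
  | succ n ih =>
    refine (ih.union (ih.biUnion fun z _ => (G.neighborSet z).toFinite)).subset fun y hy => ?_
    rcases Nat.lt_or_eq_of_le (Set.mem_ofPred.mp hy) with hlt | heq
    · exact Or.inl (Nat.lt_succ_iff.mp hlt)
    · obtain ⟨z, hyz, hz⟩ := hconn.exists_adj_dist_eq_of_dist_eq_succ heq
      exact Or.inr (Set.mem_biUnion hz.le hyz.symm)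

lemma Connected.sub_le_dist (hconn : G.Connected) {f : V → ℝ}
    (hf : ∀ u, f u ∈ Set.Icc 0 1) (u v : V) : f u - f v ≤ G.dist u v := by
  rcases eq_or_ne u v with rfl | huv
  · simp
  · have : (1 : ℝ) ≤ G.dist u v := by exact_mod_cast hconn.pos_dist_of_ne huv
    linarith [(hf u).2, (hf v).1]

lemma cliqueFree_three_of_three_lt_girth (h : 3 < G.girth) : G.CliqueFree 3 := by
  by_contra hG
  have hK : (completeGraph (Fin 3)).girth = 3 := girth_top (by simp)
  have := ((not_cliqueFree_iff_top_isContained 3).mp hG).girth_le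
    (by rw [← girth_eq_zero]; omega)
  omega

lemma exists_dist_eq_two_and_two_le_card_inter_neighborFinset [G.LocallyFinite] (h : G.girth = 4) :
    ∃ a c, G.dist a c = 2 ∧ 2 ≤ #(G.neighborFinset a ∩ G.neighborFinset c) := by
  obtain ⟨a, w, hw, hlen⟩ :=
    (exists_girth_eq_length (G := G)).mpr fun hac => by simp [girth_eq_zero.mpr hac] at h
  rcases w with
    _ | @⟨_, b, _, hab, _ | @⟨_, c, _, hbc, _ | @⟨_, e, _, hce, _ | ⟨hea, _ | ⟨_, _⟩⟩⟩⟩⟩ <;>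
    (rw [h] at hlen; simp at hlen)
  have hnodup := hw.support_nodup
  simp at hnodup
  refine ⟨a, c, cliqueFree_three_of_three_lt_girth (by omega) |>.dist_eq_two_of_adj_of_adj
    hab hbc (by tauto), one_lt_card.mpr ⟨b, ?_, e, ?_, by tauto⟩⟩ <;>
    simp [hab, hbc.symm, hce, hea.symm]

lemma setOf_dist_eq_one_and_dist_eq_one [G.LocallyFinite] (u v : V) :
    {z | G.dist u z = 1 ∧ G.dist v z = 1} = ↑(G.neighborFinset u ∩ G.neighborFinset v) := by
  ext
  simp [SimpleGraph.dist_eq_one_iff_adj]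

end SimpleGraph

lemma IsDistanceRegular.card_inter_neighborFinset_eq {G : SimpleGraph V} [G.LocallyFinite]
    (hdr : IsDistanceRegular G) {a c u v : V} (h : G.dist a c = G.dist u v) :
    #(G.neighborFinset a ∩ G.neighborFinset c) = #(G.neighborFinset u ∩ G.neighborFinset v) := by
  have := hdr a c u v h 1 1
  rwa [setOf_dist_eq_one_and_dist_eq_one, setOf_dist_eq_one_and_dist_eq_one,
    Set.ncard_coe_finset, Set.ncard_coe_finset] at this

namespace SimpleGraph

variable {G : SimpleGraph V} [G.LocallyFinite]

/-- For `G.dist x y = i` its cardinality is the intersection number `c_i`. -/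
noncomputable def neighborsToward (G : SimpleGraph V) [G.LocallyFinite] (x y : V) : Finset V :=
  {w ∈ G.neighborFinset y | G.dist x w + 1 = G.dist x y}

lemma mem_neighborsToward {x y w : V} :
    w ∈ G.neighborsToward x y ↔ G.Adj y w ∧ G.dist x w + 1 = G.dist x y := by
  simp [neighborsToward]

section CommonNeighbors

variable {m : ℕ}
  (hc₂ : ∀ u v, G.dist u v = 2 → #(G.neighborFinset u ∩ G.neighborFinset v) = m)
include hc₂

lemma sub_one_le_card_filter_adj_erase_neighborsToward (hconn : G.Connected) {x y y' w : V}
    (hy' : y' ∈ G.neighborsToward x y) (hw : w ∈ G.neighborsToward x y') :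
    m - 1 ≤ #{v ∈ (G.neighborsToward x y).erase y' | G.Adj w v} := by
  rw [mem_neighborsToward] at hy' hw
  have hyw : G.dist y w = 2 := by
    refine dist_eq_two_of_adj_of_adj hy'.1 hw.1 (fun h => by subst h; omega) fun h => ?_
    have := hconn.dist_triangle (u := x) (v := w) (w := y)
    rw [dist_comm (u := w), dist_eq_one_iff_adj.mpr h] at this
    omega
  calc m - 1 = #((G.neighborFinset y ∩ G.neighborFinset w).erase y') := by
        rw [card_erase_of_mem (by simp [hy'.1, hw.1.symm]), hc₂ y w hyw]
    _ ≤ _ := card_le_card fun v hv => by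
      simp only [mem_erase, mem_inter, mem_neighborFinset] at hv
      have h1 := hconn.dist_triangle (u := x) (v := w) (w := v)
      have h2 := hconn.dist_triangle (u := x) (v := v) (w := y)
      rw [dist_eq_one_iff_adj.mpr hv.2.2] at h1
      rw [dist_comm (u := v), dist_eq_one_iff_adj.mpr hv.2.1] at h2
      simp only [mem_filter, mem_erase, mem_neighborsToward]
      exact ⟨⟨hv.1, hv.2.1, by omega⟩, hv.2.2⟩

lemma card_filter_adj_neighborsToward_le (htf : G.CliqueFree 3) {x y y' v : V}
    (hy' : y' ∈ G.neighborsToward x y) (hv : v ∈ (G.neighborsToward x y).erase y') :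
    #{w ∈ G.neighborsToward x y' | G.Adj w v} ≤ m - 1 := by
  rw [mem_neighborsToward] at hy'
  rw [mem_erase, mem_neighborsToward] at hv
  have hvy' : G.dist v y' = 2 := htf.dist_eq_two_of_adj_of_adj hv.2.1.symm hy'.1 hv.1
  calc _ ≤ #((G.neighborFinset v ∩ G.neighborFinset y').erase y) := card_le_card fun w hw => by
        simp only [mem_filter, mem_neighborsToward] at hw
        simp only [mem_erase, mem_inter, mem_neighborFinset]
        exact ⟨fun h => by subst h; omega, hw.2.symm, hw.1.1⟩
    _ = m - 1 := by rw [card_erase_of_mem (by simp [hv.2.1.symm, hy'.1.symm]), hc₂ v y' hvy']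

lemma card_neighborsToward_lt (hconn : G.Connected) (htf : G.CliqueFree 3) (hm : 2 ≤ m)
    {x y y' : V} (hy' : y' ∈ G.neighborsToward x y) :
    #(G.neighborsToward x y') < #(G.neighborsToward x y) := by
  have key : #(G.neighborsToward x y') * (m - 1) ≤ #((G.neighborsToward x y).erase y') * (m - 1) :=
    card_mul_le_card_mul G.Adj
      (fun _ hw => sub_one_le_card_filter_adj_erase_neighborsToward hc₂ hconn hy' hw)
      (fun _ hv => card_filter_adj_neighborsToward_le hc₂ htf hy' hv)
  have := Nat.le_of_mul_le_mul_right key (by omega)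
  rw [card_erase_of_mem hy'] at this
  have := card_pos.mpr ⟨y', hy'⟩
  omega

lemma dist_le_card_neighborsToward (hconn : G.Connected) (htf : G.CliqueFree 3) (hm : 2 ≤ m)
    (x y : V) : G.dist x y ≤ #(G.neighborsToward x y) := by
  induction h : G.dist x y generalizing y with
  | zero => exact Nat.zero_le _
  | succ n ih =>
    obtain ⟨y', hyy', hy'⟩ := hconn.exists_adj_dist_eq_of_dist_eq_succ h
    have hy'mem : y' ∈ G.neighborsToward x y := mem_neighborsToward.mpr ⟨hyy', by omega⟩
    exact (ih y' hy').trans_lt (card_neighborsToward_lt hc₂ hconn htf hm hy'mem)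

lemma finite_of_isRegularOfDegree (hconn : G.Connected) (htf : G.CliqueFree 3) (hm : 2 ≤ m)
    {d : ℕ} (hreg : G.IsRegularOfDegree d) : Finite V := by
  obtain ⟨x⟩ := hconn.nonempty
  rw [← Set.finite_univ_iff]
  refine (hconn.finite_setOf_dist_le x d).subset fun y _ => ?_
  exact (dist_le_card_neighborsToward hc₂ hconn htf hm x y).trans <|
    (card_filter_le _ _).trans (hreg y).le

end CommonNeighbors

end SimpleGraph

section Transport

variable [Fintype V] {G : SimpleGraph V} {μ₁ μ₂ : V → ℝ} {π : V → V → ℝ}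

lemma IsTransportPlan.sum_eq_left (hπ : IsTransportPlan μ₁ μ₂ π) (u : V) :
    ∑ v, π u v = μ₁ u :=
  (tsum_fintype _).symm.trans (hπ.2.1 u)

lemma IsTransportPlan.sum_eq_right (hπ : IsTransportPlan μ₁ μ₂ π) (v : V) :
    ∑ u, π u v = μ₂ v :=
  (tsum_fintype _).symm.trans (hπ.2.2 v)

lemma transportCost_eq_sum (G : SimpleGraph V) (π : V → V → ℝ) :
    transportCost G π = ∑ u, ∑ v, (G.dist u v : ℝ) * π u v := by
  rw [transportCost, tsum_fintype, Fintype.sum_prod_type]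

lemma transportCost_eq_sum_sub_sum_diag (h : ∀ u v, π u v ≠ 0 → u = v ∨ G.Adj u v) :
    transportCost G π = ∑ u, ∑ v, π u v - ∑ u, π u u := by
  have hterm : ∀ u v, (G.dist u v : ℝ) * π u v = π u v - if u = v then π u v else 0 := by
    intro u v
    by_cases hπuv : π u v = 0
    · simp [hπuv]
    rcases h u v hπuv with rfl | hadj
    · simp
    · simp [dist_eq_one_iff_adj.mpr hadj, hadj.ne]
  rw [transportCost_eq_sum]
  simp only [hterm, sum_sub_distrib, sum_ite_eq]
  simp

lemma IsTransportPlan.sum_mul_sub_sum_mul_le_transportCost (hπ : IsTransportPlan μ₁ μ₂ π)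
    {f : V → ℝ} (hf : ∀ u v, f u - f v ≤ G.dist u v) :
    ∑ u, μ₁ u * f u - ∑ v, μ₂ v * f v ≤ transportCost G π := by
  calc ∑ u, μ₁ u * f u - ∑ v, μ₂ v * f v = ∑ u, ∑ v, (f u - f v) * π u v := by
        simp only [sub_mul, sum_sub_distrib, ← hπ.sum_eq_left, ← hπ.sum_eq_right, sum_mul]
        rw [sum_comm (f := fun u v => f v * π u v)]
        simp only [mul_comm]
    _ ≤ ∑ u, ∑ v, (G.dist u v : ℝ) * π u v :=
      sum_le_sum fun u _ => sum_le_sum fun v _ => mul_le_mul_of_nonneg_right (hf u v) (hπ.1 u v)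
    _ = transportCost G π := (transportCost_eq_sum G π).symm

lemma IsTransportPlan.transportCost_nonneg (hπ : IsTransportPlan μ₁ μ₂ π) :
    0 ≤ transportCost G π := by
  rw [transportCost_eq_sum]
  exact sum_nonneg fun u _ => sum_nonneg fun v _ => mul_nonneg (Nat.cast_nonneg _) (hπ.1 u v)

lemma W1_le_transportCost (hπ : IsTransportPlan μ₁ μ₂ π) : W1 G μ₁ μ₂ ≤ transportCost G π :=
  csInf_le ⟨0, fun _ ⟨_, hπ', hc⟩ => hc ▸ hπ'.transportCost_nonneg⟩ ⟨π, hπ, rfl⟩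

lemma sum_mul_sub_sum_mul_le_W1 (hπ : IsTransportPlan μ₁ μ₂ π) {f : V → ℝ}
    (hf : ∀ u v, f u - f v ≤ G.dist u v) : ∑ u, μ₁ u * f u - ∑ v, μ₂ v * f v ≤ W1 G μ₁ μ₂ :=
  le_csInf ⟨_, π, hπ, rfl⟩ fun _ ⟨_, hπ', hc⟩ => hc ▸ hπ'.sum_mul_sub_sum_mul_le_transportCost hf

end Transport

section Edge

variable {G : SimpleGraph V} {d m : ℕ} {p : ℝ} {x y : V}

def IsOppositeEdge (G : SimpleGraph V) (x y u v : V) : Prop :=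
  G.Adj x u ∧ G.Adj u v ∧ G.Adj v y ∧ u ≠ y ∧ v ≠ x

lemma isOppositeEdge_comm {u v : V} : IsOppositeEdge G x y u v ↔ IsOppositeEdge G y x v u := by
  unfold IsOppositeEdge
  constructor <;> exact fun ⟨h₁, h₂, h₃, h₄, h₅⟩ => ⟨h₃.symm, h₂.symm, h₁.symm, h₅, h₄⟩

/-- Mass `min p q` (with `q = (1-p)/d`) stays at `x` and at `y`, the excess `|p - q|` moves along
the edge, and the mass `q` at each other neighbour of `x` is spread evenly over the `m - 1`
quadrangles through the edge in which it lies. -/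
noncomputable def edgePlan (G : SimpleGraph V) (d m : ℕ) (p : ℝ) (x y u v : V) : ℝ :=
  (if u = v ∧ (u = x ∨ u = y) then min p ((1 - p) / d) else 0)
    + (if u = x ∧ v = y then p - min p ((1 - p) / d) else 0)
    + (if u = y ∧ v = x then (1 - p) / d - min p ((1 - p) / d) else 0)
    + (if IsOppositeEdge G x y u v then (1 - p) / d / (m - 1) else 0)

lemma edgePlan_comm (u v : V) : edgePlan G d m p x y u v = edgePlan G d m p y x v u := by
  have hdiag : (u = v ∧ (u = x ∨ u = y)) ↔ (v = u ∧ (v = y ∨ v = x)) := by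
    constructor <;> rintro ⟨rfl, h⟩ <;> tauto
  simp only [edgePlan, isOppositeEdge_comm (x := x), hdiag, and_comm (a := u = x),
    and_comm (a := u = y)]

lemma eq_or_adj_of_edgePlan_ne_zero (hxy : G.Adj x y) {u v : V} (h : edgePlan G d m p x y u v ≠ 0) :
    u = v ∨ G.Adj u v := by
  refine or_iff_not_imp_left.mpr fun huv => by_contra fun hadj => h ?_
  have h₂ : ¬(u = x ∧ v = y) := fun ⟨hu, hv⟩ => hadj (hu ▸ hv ▸ hxy)
  have h₃ : ¬(u = y ∧ v = x) := fun ⟨hu, hv⟩ => hadj (hu ▸ hv ▸ hxy.symm)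
  have h₄ : ¬IsOppositeEdge G x y u v := fun h => hadj h.2.1
  simp [edgePlan, huv, h₂, h₃, h₄]

variable [Fintype V]

lemma sum_edgePlan_diag (hxy : G.Adj x y) :
    ∑ u, edgePlan G d m p x y u u = 2 * min p ((1 - p) / d) := by
  have hdiag : ∀ u, edgePlan G d m p x y u u =
      (if u = x then min p ((1 - p) / d) else 0) + if u = y then min p ((1 - p) / d) else 0 := by
    intro u
    have h₄ : ¬IsOppositeEdge G x y u u := fun h => G.irrefl h.2.1
    rcases eq_or_ne u x with rfl | hux
    · simp [edgePlan, hxy.ne, h₄]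
    · simp [edgePlan, hux, h₄]
  simp only [hdiag, sum_add_distrib, sum_ite_eq', mem_univ, if_true]
  ring

variable [G.LocallyFinite]

lemma sum_muMeasure_mul (g : V → ℝ) :
    ∑ u, muMeasure G d p x u * g u = p * g x + (1 - p) / d * ∑ z ∈ G.neighborFinset x, g z := by
  have hsplit : ∀ u, muMeasure G d p x u * g u =
      (if u = x then p * g x else 0) + if u ∈ G.neighborFinset x then (1 - p) / d * g u else 0 := by
    intro u
    rcases eq_or_ne u x with rfl | hux
    · simp [muMeasure]
    · by_cases hadj : G.Adj x u <;> simp [muMeasure, hux, hadj]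
  simp only [hsplit, sum_add_distrib, sum_ite_eq', mem_univ, if_true, sum_ite_mem, univ_inter,
    mul_sum]

lemma sum_muMeasure (hreg : G.IsRegularOfDegree d) (hd : d ≠ 0) (x : V) :
    ∑ u, muMeasure G d p x u = 1 := by
  have := sum_muMeasure_mul (G := G) (d := d) (p := p) (x := x) 1
  simp only [Pi.one_apply, mul_one, sum_const, card_neighborFinset_eq_degree, hreg x,
    nsmul_eq_mul] at this
  rw [this]
  field_simp
  ring

lemma sum_ite_isOppositeEdge (htf : G.CliqueFree 3)
    (hc₂ : ∀ u v, G.dist u v = 2 → #(G.neighborFinset u ∩ G.neighborFinset v) = m)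
    (hxy : G.Adj x y) (c : ℝ) (u : V) :
    ∑ v, (if IsOppositeEdge G x y u v then c else 0) =
      if G.Adj x u ∧ u ≠ y then ((m : ℝ) - 1) * c else 0 := by
  split_ifs with hu
  · have hfilter : ({v | IsOppositeEdge G x y u v} : Finset V) =
        (G.neighborFinset u ∩ G.neighborFinset y).erase x := by
      ext v
      rw [mem_filter_univ]
      simp only [IsOppositeEdge, mem_erase, mem_inter, mem_neighborFinset]
      constructor
      · exact fun ⟨_, huv, hvy, _, hvx⟩ => ⟨hvx, huv, hvy.symm⟩
      · exact fun ⟨hvx, huv, hyv⟩ => ⟨hu.1, huv, hyv.symm, hu.2, hvx⟩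
    rw [← sum_filter, sum_const, nsmul_eq_mul, hfilter,
      cast_card_erase_of_mem (by simp [hu.1.symm, hxy.symm]),
      hc₂ u y (htf.dist_eq_two_of_adj_of_adj hu.1.symm hxy hu.2)]
  · exact sum_eq_zero fun v _ => if_neg fun h => hu ⟨h.1, h.2.2.2.1⟩

lemma sum_edgePlan_left (htf : G.CliqueFree 3)
    (hc₂ : ∀ u v, G.dist u v = 2 → #(G.neighborFinset u ∩ G.neighborFinset v) = m) (hm : 2 ≤ m)
    (hxy : G.Adj x y) (u : V) : ∑ v, edgePlan G d m p x y u v = muMeasure G d p x u := by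
  have hm1 : (m : ℝ) - 1 ≠ 0 := by
    have : (2 : ℝ) ≤ m := by exact_mod_cast hm
    linarith
  simp only [edgePlan, sum_add_distrib, sum_ite_isOppositeEdge htf hc₂ hxy]
  rcases eq_or_ne u x with rfl | hux
  · simp [muMeasure, hxy.ne]
  rcases eq_or_ne u y with rfl | huy
  · simp [muMeasure, hux, hxy]
  by_cases hadj : G.Adj x u <;> simp [muMeasure, hux, huy, hadj]
  field_simp

lemma sum_edgePlan_right (htf : G.CliqueFree 3)
    (hc₂ : ∀ u v, G.dist u v = 2 → #(G.neighborFinset u ∩ G.neighborFinset v) = m) (hm : 2 ≤ m)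
    (hxy : G.Adj x y) (v : V) : ∑ u, edgePlan G d m p x y u v = muMeasure G d p y v := by
  simp_rw [edgePlan_comm (x := x)]
  exact sum_edgePlan_left htf hc₂ hm hxy.symm v

lemma isTransportPlan_edgePlan (htf : G.CliqueFree 3)
    (hc₂ : ∀ u v, G.dist u v = 2 → #(G.neighborFinset u ∩ G.neighborFinset v) = m) (hm : 2 ≤ m)
    (hxy : G.Adj x y) (hp : p ∈ Set.Icc 0 1) :
    IsTransportPlan (muMeasure G d p x) (muMeasure G d p y) (edgePlan G d m p x y) := by
  refine ⟨fun u v => ?_, fun u => ?_, fun v => ?_⟩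
  · have hq : 0 ≤ (1 - p) / d := div_nonneg (by linarith [hp.2]) d.cast_nonneg
    have hm1 : (0 : ℝ) ≤ m - 1 := by
      have : (2 : ℝ) ≤ m := by exact_mod_cast hm
      linarith
    have hmin := le_min hp.1 hq
    have := min_le_left p ((1 - p) / d)
    have := min_le_right p ((1 - p) / d)
    unfold edgePlan
    split_ifs <;> linarith [div_nonneg hq hm1]
  · rw [tsum_fintype, sum_edgePlan_left htf hc₂ hm hxy]
  · rw [tsum_fintype, sum_edgePlan_right htf hc₂ hm hxy]

lemma transportCost_edgePlan (htf : G.CliqueFree 3)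
    (hc₂ : ∀ u v, G.dist u v = 2 → #(G.neighborFinset u ∩ G.neighborFinset v) = m) (hm : 2 ≤ m)
    (hreg : G.IsRegularOfDegree d) (hd : d ≠ 0) (hxy : G.Adj x y) :
    transportCost G (edgePlan G d m p x y) = 1 - 2 * min p ((1 - p) / d) := by
  rw [transportCost_eq_sum_sub_sum_diag fun u v => eq_or_adj_of_edgePlan_ne_zero hxy,
    sum_edgePlan_diag hxy]
  simp only [sum_edgePlan_left htf hc₂ hm hxy, sum_muMeasure hreg hd]

lemma one_sub_two_mul_le_W1 (hconn : G.Connected) (htf : G.CliqueFree 3)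
    (hreg : G.IsRegularOfDegree d) (hd : d ≠ 0) (hxy : G.Adj x y) {π : V → V → ℝ}
    (hπ : IsTransportPlan (muMeasure G d p x) (muMeasure G d p y) π) :
    1 - 2 * p ≤ W1 G (muMeasure G d p x) (muMeasure G d p y) := by
  let f : V → ℝ := fun u => if G.Adj x u then 1 else 0
  have hfx : ∑ z ∈ G.neighborFinset x, f z = d := by
    rw [sum_congr rfl fun z hz => if_pos ((mem_neighborFinset _ _ _).mp hz), sum_const,
      card_neighborFinset_eq_degree, hreg x, nsmul_one]
  have hfy : ∑ z ∈ G.neighborFinset y, f z = 0 :=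
    sum_eq_zero fun z hz =>
      if_neg (htf.not_adj_of_adj_of_adj hxy.symm ((mem_neighborFinset _ _ _).mp hz))
  refine le_of_eq_of_le ?_ (sum_mul_sub_sum_mul_le_W1 hπ (hconn.sub_le_dist (f := f) ?_))
  · rw [sum_muMeasure_mul, sum_muMeasure_mul, hfx, hfy]
    simp only [f, G.irrefl, hxy, if_true, if_false]
    field_simp
    ring
  · intro u; simp only [f]; split_ifs <;> simp

lemma one_sub_two_mul_div_le_W1 (hconn : G.Connected) (htf : G.CliqueFree 3)
    (hreg : G.IsRegularOfDegree d) (hd : d ≠ 0) (hxy : G.Adj x y) {π : V → V → ℝ}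
    (hπ : IsTransportPlan (muMeasure G d p x) (muMeasure G d p y) π) :
    1 - 2 * ((1 - p) / d) ≤ W1 G (muMeasure G d p x) (muMeasure G d p y) := by
  let f : V → ℝ := fun u => if u = x ∨ (G.Adj x u ∧ u ≠ y) then 1 else 0
  have hfx : ∑ z ∈ G.neighborFinset x, f z = d - 1 := by
    have : ∀ z ∈ G.neighborFinset x, f z = 1 - if z = y then 1 else 0 := fun z hz => by
      have hzx : z ≠ x := ((mem_neighborFinset _ _ _).mp hz).ne'
      by_cases hzy : z = y <;> simp_all [f]
    rw [sum_congr rfl this, sum_sub_distrib, sum_ite_eq', if_pos (by simpa using hxy), sum_const,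
      card_neighborFinset_eq_degree, hreg x, nsmul_one]
  have hfy : ∑ z ∈ G.neighborFinset y, f z = 1 := by
    have : ∀ z ∈ G.neighborFinset y, f z = if z = x then 1 else 0 := fun z hz => by
      have hxz := htf.not_adj_of_adj_of_adj hxy.symm ((mem_neighborFinset _ _ _).mp hz)
      by_cases hzx : z = x <;> simp [f, hzx, hxz]
    rw [sum_congr rfl this, sum_ite_eq', if_pos (by simpa using hxy.symm)]
  refine le_of_eq_of_le ?_ (sum_mul_sub_sum_mul_le_W1 hπ (hconn.sub_le_dist (f := f) ?_))
  · rw [sum_muMeasure_mul, sum_muMeasure_mul, hfx, hfy]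
    simp [f, hxy.ne']
    field_simp
    ring
  · intro u; simp only [f]; split_ifs <;> simp

lemma kappa_eq_two_mul_min (hconn : G.Connected) (htf : G.CliqueFree 3)
    (hc₂ : ∀ u v, G.dist u v = 2 → #(G.neighborFinset u ∩ G.neighborFinset v) = m) (hm : 2 ≤ m)
    (hreg : G.IsRegularOfDegree d) (hd : d ≠ 0) (hxy : G.Adj x y) (hp : p ∈ Set.Icc 0 1) :
    kappa G d p x y = 2 * min p ((1 - p) / d) := by
  have hπ := isTransportPlan_edgePlan (d := d) htf hc₂ hm hxy hp
  suffices W1 G (muMeasure G d p x) (muMeasure G d p y) = 1 - 2 * min p ((1 - p) / d) by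
    rw [kappa, this]
    ring
  refine le_antisymm ((W1_le_transportCost hπ).trans_eq
    (transportCost_edgePlan htf hc₂ hm hreg hd hxy)) ?_
  rcases min_choice p ((1 - p) / d) with h | h <;> rw [h]
  · exact one_sub_two_mul_le_W1 hconn htf hreg hd hxy hπ
  · exact one_sub_two_mul_div_le_W1 hconn htf hreg hd hxy hπ

end Edge

open Topology in
lemma kappaLLY_eq_of_eventually {G : SimpleGraph V} {d : ℕ} {x y : V} {c : ℝ}
    (h : ∀ᶠ p in 𝓝[<] 1, kappa G d p x y = c * (1 - p)) : kappaLLY G d x y = c := by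
  refine Tendsto.limUnder_eq (tendsto_const_nhds.congr' ?_)
  filter_upwards [h, self_mem_nhdsWithin] with p hp hp1
  rw [hp, mul_div_cancel_right₀ _ (sub_ne_zero.mpr (ne_of_lt hp1).symm)]

/-- For a distance-regular graph of vertex degree `d` and girth `4`,
every edge satisfies `κ₀(x,y) = 0` and `κ_LLY(x,y) = 2/d`. -/
theorem stmt_17 (G : SimpleGraph V) [G.LocallyFinite] (hconn : G.Connected)
    (d : ℕ) (hreg : G.IsRegularOfDegree d) (hdr : IsDistanceRegular G)
    (hgirth : G.girth = 4) :
    ∀ x y : V, G.Adj x y → kappa G d 0 x y = 0 ∧ kappaLLY G d x y = 2 / (d : ℝ) := by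
  intro x y hxy
  have htf : G.CliqueFree 3 := cliqueFree_three_of_three_lt_girth (by omega)
  obtain ⟨a, c, hac, hm⟩ := exists_dist_eq_two_and_two_le_card_inter_neighborFinset hgirth
  have hc₂ : ∀ u v, G.dist u v = 2 →
      #(G.neighborFinset u ∩ G.neighborFinset v) = #(G.neighborFinset a ∩ G.neighborFinset c) :=
    fun u v huv => (hdr.card_inter_neighborFinset_eq (hac.trans huv.symm)).symm
  have := finite_of_isRegularOfDegree hc₂ hconn htf hm hreg
  have := Fintype.ofFinite V
  have hd : 1 ≤ d := hreg x ▸ (G.degree_pos_iff_exists_adj x).mpr ⟨y, hxy⟩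
  have hκ := fun p (hp : p ∈ Set.Icc (0 : ℝ) 1) =>
    kappa_eq_two_mul_min hconn htf hc₂ hm hreg (by omega) hxy hp
  refine ⟨by simp [hκ 0 (by simp)], kappaLLY_eq_of_eventually ?_⟩
  filter_upwards [Ioo_mem_nhdsLT (show (1 : ℝ) / 2 < 1 by norm_num)] with p hp
  have hq : (1 - p) / d ≤ p :=
    (div_le_self (by linarith [hp.2]) (by exact_mod_cast hd)).trans (by linarith [hp.1])
  rw [hκ p ⟨by linarith [hp.1], hp.2.le⟩, min_eq_right hq]
  field_simp
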